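/- Properties of the restricted squared norm on a Hilbert space: Let E be a real Hilbert space (identify E* with E via the inner product), let C ⊆ E be nonempty, closed and convex, let ρ = sup_{x,y∈C} ‖x − y‖ ∈ (0, +∞], and define ψ(x) = ‖x‖²/2 for x ∈ C and ψ(x) = +∞ otherwise. Let P_C denote the metric projection onto C. Then: (i) for every x ∈ E, x ∈ ∂ψ(P_C(x)); in particular ∂ψ(C) := ∪_{z∈C} ∂ψ(z) = E; (ii) for every x ∈ E, ∂ψ*(x) = {P_C(x)}, i.e. the subdifferential of ψ* is single-valued and equals P_C; (iii) ψ*(x) = ‖x‖²/2 − ‖x − P_C(x)‖²/2 for all x ∈ E; (iv) ψ is Q_ρ-convex: B_ψ(y, z*) ≥ Q_ρ(‖y − z‖) for every y ∈ E, z ∈ C, z* ∈ ∂ψ(z). -/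

import Mathlib

open scoped ENNReal

/-- Fenchel conjugate on a real Hilbert space (`E*` identified with `E` via the inner
product): `ψ*(y) = sup_x (⟨y, x⟩ − ψ(x))`. -/
noncomputable def fconj {E : Type*} [NormedAddCommGroup E] [InnerProductSpace ℝ E]
    (ψ : E → EReal) (p : E) : EReal :=
  ⨆ x : E, (((inner ℝ p x : ℝ)) : EReal) - ψ x

/-- Generalized Bregman divergence `B_ψ(x, y) = ψ(x) + ψ*(y) − ⟨y, x⟩`. -/
noncomputable def breg {E : Type*} [NormedAddCommGroup E] [InnerProductSpace ℝ E]
    (ψ : E → EReal) (x : E) (p : E) : EReal :=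
  ψ x + fconj ψ p - (((inner ℝ p x : ℝ)) : EReal)

/-- Subdifferential: `∂ψ(x) = {y : B_ψ(x, y) = 0}`. -/
def subdiff {E : Type*} [NormedAddCommGroup E] [InnerProductSpace ℝ E]
    (ψ : E → EReal) (x : E) : Set E :=
  {p | breg ψ x p = 0}

/-- The truncated quadratic `Q_ρ` for `ρ ∈ (0, +∞]`:
`Q_ρ(x) = x²/2` if `|x| ≤ ρ`, `+∞` otherwise. -/
noncomputable def Qtrunc (ρ : ℝ≥0∞) (x : ℝ) : EReal :=
  open scoped Classical in
  if ENNReal.ofReal |x| ≤ ρ then ((x ^ 2 / 2 : ℝ) : EReal) else ⊤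

/-! Completing the square, `⟪x, z⟫ - ‖z‖²/2 = ‖x‖²/2 - ‖x - z‖²/2`, so evaluating `ψ*(x)` amounts
to minimising `‖x - z‖` over `C`: the supremum is attained exactly at the nearest point `P_C x`,
which is unique by convexity. For `y ∈ C` the Bregman divergence `B_ψ(y, x)` then equals
`(‖x - y‖² - ‖x - P_C x‖²)/2`, and the obtuse-angle characterisation
`⟪x - P_C x, y - P_C x⟫ ≤ 0` of the projection bounds it below by `‖y - P_C x‖²/2`, which is
`Q_ρ(‖y - P_C x‖)` because both points lie in `C`. -/

theorem EReal.sub_coe_eq_zero_iff {a : EReal} {r : ℝ} : a - r = 0 ↔ a = r := by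
  induction a using EReal.rec with
  | bot => simp
  | top => simp
  | coe a => norm_cast; exact sub_eq_zero

section

variable {E : Type*} [NormedAddCommGroup E] {C : Set E}

theorem Qtrunc_ediam_norm_sub {y z : E} (hy : y ∈ C) (hz : z ∈ C) :
    Qtrunc (Metric.ediam C) ‖y - z‖ = ((‖y - z‖ ^ 2 / 2 : ℝ) : EReal) := by
  have hle : ENNReal.ofReal |‖y - z‖| ≤ Metric.ediam C := by
    rw [abs_norm, ← dist_eq_norm, ← edist_dist]
    exact Metric.edist_le_ediam_of_mem hy hz
  rw [Qtrunc, if_pos hle]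

def IsNearestPoint (C : Set E) (x z : E) : Prop :=
  z ∈ C ∧ ∀ y ∈ C, ‖x - z‖ ≤ ‖x - y‖

namespace IsNearestPoint

variable {x z : E}

theorem norm_eq_iInf (h : IsNearestPoint C x z) : ‖x - z‖ = ⨅ w : C, ‖x - w‖ := by
  have : Nonempty C := ⟨⟨z, h.1⟩⟩
  have hbdd : BddBelow (Set.range fun w : C => ‖x - w‖) :=
    ⟨0, by rintro _ ⟨w, rfl⟩; positivity⟩
  exact le_antisymm (le_ciInf fun w => h.2 w w.2) (ciInf_le hbdd ⟨z, h.1⟩)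

end IsNearestPoint

noncomputable def halfSqNormOn (C : Set E) (x : E) : EReal :=
  open scoped Classical in
  if x ∈ C then ((‖x‖ ^ 2 / 2 : ℝ) : EReal) else ⊤

theorem halfSqNormOn_of_mem {x : E} (hx : x ∈ C) :
    halfSqNormOn C x = ((‖x‖ ^ 2 / 2 : ℝ) : EReal) := by
  simp [halfSqNormOn, hx]

theorem halfSqNormOn_of_notMem {x : E} (hx : x ∉ C) : halfSqNormOn C x = ⊤ := by
  simp [halfSqNormOn, hx]

variable [InnerProductSpace ℝ E]

theorem mem_subdiff_iff {ψ : E → EReal} {x p : E} :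
    p ∈ subdiff ψ x ↔ ψ x + fconj ψ p = ((inner ℝ p x : ℝ) : EReal) :=
  EReal.sub_coe_eq_zero_iff

theorem real_inner_sub_half_sq_norm (x z : E) :
    inner ℝ x z - ‖z‖ ^ 2 / 2 = ‖x‖ ^ 2 / 2 - ‖x - z‖ ^ 2 / 2 := by
  rw [norm_sub_sq_real]
  ring

namespace IsNearestPoint

variable {x z : E}

theorem real_inner_le_zero (hC : Convex ℝ C) (h : IsNearestPoint C x z) {y : E} (hy : y ∈ C) :
    inner ℝ (x - z) (y - z) ≤ 0 :=
  (norm_eq_iInf_iff_real_inner_le_zero hC h.1).mp h.norm_eq_iInf y hy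

theorem unique (hC : Convex ℝ C) {z' : E} (h : IsNearestPoint C x z)
    (h' : IsNearestPoint C x z') : z = z' := by
  have hsum : inner ℝ (x - z) (z' - z) + inner ℝ (x - z') (z - z') = ‖z' - z‖ ^ 2 := by
    rw [← neg_sub z' z, inner_neg_right, ← sub_eq_add_neg, ← inner_sub_left,
      sub_sub_sub_cancel_left, real_inner_self_eq_norm_sq]
  have hz := h.real_inner_le_zero hC h'.1
  have hz' := h'.real_inner_le_zero hC h.1
  have hnorm : ‖z' - z‖ = 0 := by nlinarith [norm_nonneg (z' - z)]
  exact (sub_eq_zero.mp (norm_eq_zero.mp hnorm)).symm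

theorem sq_norm_sub_add_sq_norm_sub_le (hC : Convex ℝ C) (h : IsNearestPoint C x z) {y : E}
    (hy : y ∈ C) : ‖y - z‖ ^ 2 + ‖x - z‖ ^ 2 ≤ ‖x - y‖ ^ 2 := by
  have hxy : x - y = (x - z) - (y - z) := by abel
  rw [hxy, @norm_sub_sq_real _ _ _ (x - z) (y - z)]
  linarith [h.real_inner_le_zero hC hy]

end IsNearestPoint

theorem fconj_halfSqNormOn {x z : E} (h : IsNearestPoint C x z) :
    fconj (halfSqNormOn C) x = ((‖x‖ ^ 2 / 2 - ‖x - z‖ ^ 2 / 2 : ℝ) : EReal) := by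
  refine le_antisymm (iSup_le fun w => ?_) ?_
  · by_cases hw : w ∈ C
    · rw [halfSqNormOn_of_mem hw, ← EReal.coe_sub, EReal.coe_le_coe_iff,
        real_inner_sub_half_sq_norm]
      have hnear := h.2 w hw
      gcongr
    · simp [halfSqNormOn_of_notMem hw]
  · have hz : ((inner ℝ x z : ℝ) : EReal) - halfSqNormOn C z
        = ((‖x‖ ^ 2 / 2 - ‖x - z‖ ^ 2 / 2 : ℝ) : EReal) := by
      rw [halfSqNormOn_of_mem h.1, ← EReal.coe_sub, real_inner_sub_half_sq_norm]
    exact hz ▸ le_iSup (fun w => ((inner ℝ x w : ℝ) : EReal) - halfSqNormOn C w) z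

theorem breg_halfSqNormOn_of_mem {y p z : E} (hy : y ∈ C) (h : IsNearestPoint C p z) :
    breg (halfSqNormOn C) y p = ((‖p - y‖ ^ 2 / 2 - ‖p - z‖ ^ 2 / 2 : ℝ) : EReal) := by
  rw [breg, halfSqNormOn_of_mem hy, fconj_halfSqNormOn h, ← EReal.coe_add, ← EReal.coe_sub,
    EReal.coe_eq_coe_iff]
  linarith [real_inner_sub_half_sq_norm p y]

theorem breg_halfSqNormOn_of_notMem {y p z : E} (hy : y ∉ C) (h : IsNearestPoint C p z) :
    breg (halfSqNormOn C) y p = ⊤ := by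
  rw [breg, halfSqNormOn_of_notMem hy, fconj_halfSqNormOn h, EReal.top_add_coe,
    EReal.top_sub_coe]

theorem mem_subdiff_halfSqNormOn_iff (hC : Convex ℝ C) {y p z : E} (h : IsNearestPoint C p z) :
    p ∈ subdiff (halfSqNormOn C) y ↔ y = z := by
  by_cases hy : y ∈ C
  · rw [subdiff, Set.mem_ofPred_eq, breg_halfSqNormOn_of_mem hy h, EReal.coe_eq_zero]
    constructor
    · intro hbreg
      have hnorm : ‖p - y‖ = ‖p - z‖ := by
        nlinarith [norm_nonneg (p - y), norm_nonneg (p - z)]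
      exact IsNearestPoint.unique hC ⟨hy, hnorm ▸ h.2⟩ h
    · rintro rfl
      ring
  · rw [subdiff, Set.mem_ofPred_eq, breg_halfSqNormOn_of_notMem hy h]
    simp only [EReal.top_ne_zero, false_iff]
    rintro rfl
    exact hy h.1

theorem Qtrunc_le_breg_halfSqNormOn (hC : Convex ℝ C) {p z : E} (h : IsNearestPoint C p z)
    (y : E) : Qtrunc (Metric.ediam C) ‖y - z‖ ≤ breg (halfSqNormOn C) y p := by
  by_cases hy : y ∈ C
  · rw [Qtrunc_ediam_norm_sub hy h.1, breg_halfSqNormOn_of_mem hy h, EReal.coe_le_coe_iff]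
    linarith [h.sq_norm_sub_add_sq_norm_sub_le hC hy]
  · rw [breg_halfSqNormOn_of_notMem hy h]
    exact le_top

end

theorem restricted_squared_norm_properties_general
    {E : Type*} [NormedAddCommGroup E] [InnerProductSpace ℝ E]
    (C : Set E) (hCconv : Convex ℝ C)
    (ψ : E → EReal)
    (hψ : ∀ x : E, (x ∈ C → ψ x = ((‖x‖ ^ 2 / 2 : ℝ) : EReal)) ∧ (x ∉ C → ψ x = ⊤))
    (P : E → E)
    (hP : ∀ x : E, P x ∈ C ∧ ∀ y ∈ C, ‖x - P x‖ ≤ ‖x - y‖) :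
    (∀ x : E, x ∈ subdiff ψ (P x)) ∧
    (⋃ z ∈ C, subdiff ψ z) = Set.univ ∧
    (∀ x : E, {z : E | ψ z + fconj ψ x = (((inner ℝ x z : ℝ)) : EReal)} = {P x}) ∧
    (∀ x : E, fconj ψ x = ((‖x‖ ^ 2 / 2 - ‖x - P x‖ ^ 2 / 2 : ℝ) : EReal)) ∧
    (∀ (y z p : E), z ∈ C → p ∈ subdiff ψ z →
      Qtrunc (EMetric.diam C) ‖y - z‖ ≤ breg ψ y p) := by
  obtain rfl : ψ = halfSqNormOn C := funext fun x => by
    by_cases hx : x ∈ C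
    · rw [(hψ x).1 hx, halfSqNormOn_of_mem hx]
    · rw [(hψ x).2 hx, halfSqNormOn_of_notMem hx]
  have hsubdiff (x z : E) : x ∈ subdiff (halfSqNormOn C) z ↔ z = P x :=
    mem_subdiff_halfSqNormOn_iff hCconv (hP x)
  refine ⟨fun x => (hsubdiff x _).2 rfl, ?_, fun x => ?_, fun x => fconj_halfSqNormOn (hP x),
    fun y z p _ hp => ?_⟩
  · exact Set.eq_univ_of_forall fun x => Set.mem_biUnion (hP x).1 ((hsubdiff x _).2 rfl)
  · ext z
    rw [Set.mem_ofPred_eq, ← mem_subdiff_iff, hsubdiff, Set.mem_singleton_iff]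
  · obtain rfl := (hsubdiff p z).1 hp
    exact Qtrunc_le_breg_halfSqNormOn hCconv (hP p) y

/-- **Properties of the restricted squared norm on a Hilbert space.**
With `ψ = ‖·‖²/2 + χ_C` and `P_C` the metric projection onto the nonempty closed
convex set `C`, and `ρ = diam C ∈ (0, +∞]`:
(i) `x ∈ ∂ψ(P_C x)` for all `x`, and `∂ψ(C) = E`;
(ii) `∂ψ*(x) = {P_C x}` for all `x`;
(iii) `ψ*(x) = ‖x‖²/2 − ‖x − P_C x‖²/2`;
(iv) `ψ` is `Q_ρ`-convex. -/
theorem restricted_squared_norm_properties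
    {E : Type*} [NormedAddCommGroup E] [InnerProductSpace ℝ E] [CompleteSpace E]
    (C : Set E) (hCne : C.Nonempty) (hCclosed : IsClosed C) (hCconv : Convex ℝ C)
    (hρ : 0 < EMetric.diam C)
    (ψ : E → EReal)
    (hψ : ∀ x : E, (x ∈ C → ψ x = ((‖x‖ ^ 2 / 2 : ℝ) : EReal)) ∧ (x ∉ C → ψ x = ⊤))
    (P : E → E)
    (hP : ∀ x : E, P x ∈ C ∧ ∀ y ∈ C, ‖x - P x‖ ≤ ‖x - y‖) :
    (∀ x : E, x ∈ subdiff ψ (P x)) ∧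
    (⋃ z ∈ C, subdiff ψ z) = Set.univ ∧
    (∀ x : E, {z : E | ψ z + fconj ψ x = (((inner ℝ x z : ℝ)) : EReal)} = {P x}) ∧
    (∀ x : E, fconj ψ x = ((‖x‖ ^ 2 / 2 - ‖x - P x‖ ^ 2 / 2 : ℝ) : EReal)) ∧
    (∀ (y z p : E), z ∈ C → p ∈ subdiff ψ z →
      Qtrunc (EMetric.diam C) ‖y - z‖ ≤ breg ψ y p) :=
  restricted_squared_norm_properties_general C hCconv ψ hψ P hP
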